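/- arXiv:1507.05533 — 2 statements merged into one kernel-verified Lean document; each statement's English description precedes it below -/
import Mathlib

section
/- Suppose S, D, Y_1,...,Y_Γ are random variables over a finite alphabet of size q, entropies measured in base q, such that: (i) H(S | Y_1,...,Y_Γ) = H(S) (strong security), (ii) H(S | D) = 0 (perfect reconstruction), (iii) H(D) ≤ M, (iv) H(Y_1,...,Y_Γ) ≥ Γ, and (v) H(Y_1,...,Y_Γ | D, S) = 0. Then H(S) ≤ M − Γ. -/
open Finset

/-- Probability that the random variable `X` on the finite weighted space `(Ω, μ)`
takes the value `a`. -/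
noncomputable def pr {Ω α : Type*} [Fintype Ω] [DecidableEq α]
    (μ : Ω → ℝ) (X : Ω → α) (a : α) : ℝ :=
  ∑ ω ∈ Finset.univ.filter (fun ω => X ω = a), μ ω

/-- Base-`q` Shannon entropy of the random variable `X`. -/
noncomputable def ent {Ω α : Type*} [Fintype Ω] [Fintype α] [DecidableEq α]
    (q : ℝ) (μ : Ω → ℝ) (X : Ω → α) : ℝ :=
  -∑ a, pr μ X a * Real.logb q (pr μ X a)

/-- Conditional entropy `H(X | Y) = H(X, Y) - H(Y)` (base `q`). -/
noncomputable def condEnt {Ω α β : Type*} [Fintype Ω] [Fintype α] [Fintype β]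
    [DecidableEq α] [DecidableEq β] (q : ℝ) (μ : Ω → ℝ) (X : Ω → α) (Y : Ω → β) : ℝ :=
  ent q μ (fun ω => (X ω, Y ω)) - ent q μ Y

/-- Mutual information `I(X ; Y) = H(X) - H(X | Y)` (base `q`). -/
noncomputable def mutInfo {Ω α β : Type*} [Fintype Ω] [Fintype α] [Fintype β]
    [DecidableEq α] [DecidableEq β] (q : ℝ) (μ : Ω → ℝ) (X : Ω → α) (Y : Ω → β) : ℝ :=
  ent q μ X - condEnt q μ X Y

/-! Since `Y` is a function of `(D, S)` and `D` determines `S`, the chain rule gives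
`H(S) + H(Y) = H(S, Y) ≤ H(Y, D, S) = H(D, S) = H(D)`. The only inequality needed is that entropy does
not increase under a deterministic map, which holds because the probability of each
fibre dominates the probabilities of its points and `logb q` is monotone for `q > 1`. -/

lemma pr_nonneg {Ω α : Type*} [Fintype Ω] [DecidableEq α]
    {μ : Ω → ℝ} (hμ0 : ∀ ω, 0 ≤ μ ω) (X : Ω → α) (a : α) : 0 ≤ pr μ X a :=
  sum_nonneg fun ω _ => hμ0 ω

lemma pr_comp {Ω α β : Type*} [Fintype Ω] [Fintype α] [DecidableEq α] [DecidableEq β]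
    (μ : Ω → ℝ) (X : Ω → α) (g : α → β) (b : β) :
    pr μ (fun ω => g (X ω)) b = ∑ a ∈ univ.filter (fun a => g a = b), pr μ X a := by
  rw [pr, ← sum_fiberwise_of_maps_to (g := X) (t := univ.filter (g · = b)) (by simp)]
  refine sum_congr rfl fun a ha => ?_
  rw [filter_filter]
  congr 1
  ext ω
  simp only [mem_filter, mem_univ, true_and] at ha ⊢
  exact ⟨And.right, fun hXa => ⟨hXa ▸ ha, hXa⟩⟩

lemma ent_comp_le {Ω α β : Type*} [Fintype Ω] [Fintype α] [Fintype β]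
    [DecidableEq α] [DecidableEq β]
    {q : ℝ} (hq : 1 < q) {μ : Ω → ℝ} (hμ0 : ∀ ω, 0 ≤ μ ω) (X : Ω → α) (g : α → β) :
    ent q μ (fun ω => g (X ω)) ≤ ent q μ X := by
  rw [ent, ent, neg_le_neg_iff, ← sum_fiberwise univ g]
  refine sum_le_sum fun b _ => ?_
  rw [pr_comp μ X g b, sum_mul]
  refine sum_le_sum fun a ha => ?_
  rcases (pr_nonneg hμ0 X a).eq_or_lt with h0 | h0
  · simp [← h0]
  · have h_le_fibre : pr μ X a ≤ ∑ a' ∈ univ.filter (fun a' => g a' = b), pr μ X a' :=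
      single_le_sum (fun a' _ => pr_nonneg hμ0 X a') ha
    exact mul_le_mul_of_nonneg_left (Real.logb_le_logb_of_le hq h0 h_le_fibre) h0.le

lemma ent_prod_comm {Ω α β : Type*} [Fintype Ω] [Fintype α] [Fintype β]
    [DecidableEq α] [DecidableEq β]
    {q : ℝ} (hq : 1 < q) {μ : Ω → ℝ} (hμ0 : ∀ ω, 0 ≤ μ ω) (X : Ω → α) (Y : Ω → β) :
    ent q μ (fun ω => (X ω, Y ω)) = ent q μ (fun ω => (Y ω, X ω)) :=
  le_antisymm (ent_comp_le hq hμ0 (fun ω => (Y ω, X ω)) Prod.swap)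
    (ent_comp_le hq hμ0 (fun ω => (X ω, Y ω)) Prod.swap)

theorem stmt1_general {Ω A B C : Type*} [Fintype Ω] [Fintype A] [Fintype B] [Fintype C]
    [DecidableEq A] [DecidableEq B] [DecidableEq C]
    (q : ℝ) (hq : 1 < q) (μ : Ω → ℝ) (hμ0 : ∀ ω, 0 ≤ μ ω)
    (S : Ω → A) (D : Ω → B) (Y : Ω → C) (M Γ : ℝ)
    (hsec : condEnt q μ S Y = ent q μ S)
    (hrec : condEnt q μ S D = 0)
    (hD : ent q μ D ≤ M)
    (hY : ent q μ Y ≥ Γ)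
    (hfun : condEnt q μ Y (fun ω => (D ω, S ω)) = 0) :
    ent q μ S ≤ M - Γ := by
  unfold condEnt at hsec hrec hfun
  calc ent q μ S = ent q μ (fun ω => (S ω, Y ω)) - ent q μ Y := by linarith
    _ ≤ ent q μ (fun ω => (Y ω, (D ω, S ω))) - ent q μ Y := by
        gcongr
        exact ent_comp_le hq hμ0 (fun ω => (Y ω, (D ω, S ω))) fun p => (p.2.2, p.1)
    _ = ent q μ (fun ω => (S ω, D ω)) - ent q μ Y := by
        rw [← ent_prod_comm hq hμ0 D S]
        linarith
    _ = ent q μ D - ent q μ Y := by linarith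
    _ ≤ M - Γ := by linarith

/-- Upper bound on the strong secrecy caching capacity: `H(S) ≤ M - Γ`. -/
theorem stmt1 {Ω A B C : Type*} [Fintype Ω] [Fintype A] [Fintype B] [Fintype C]
    [DecidableEq A] [DecidableEq B] [DecidableEq C]
    (q : ℝ) (hq : 1 < q) (μ : Ω → ℝ) (hμ0 : ∀ ω, 0 ≤ μ ω) (hμ1 : ∑ ω, μ ω = 1)
    (S : Ω → A) (D : Ω → B) (Y : Ω → C) (M Γ : ℝ)
    (hsec : condEnt q μ S Y = ent q μ S)
    (hrec : condEnt q μ S D = 0)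
    (hD : ent q μ D ≤ M)
    (hY : ent q μ Y ≥ Γ)
    (hfun : condEnt q μ Y (fun ω => (D ω, S ω)) = 0) :
    ent q μ S ≤ M - Γ :=
  stmt1_general q hq μ hμ0 S D Y M Γ hsec hrec hD hY hfun
end

section
/- In the setting of Theorem 1 (an (n,k)-MDS caching network, t packets per node, node i retaining |P_i| packets and broadcasting r_i packets), if n_h ≤ k (at most k healthy nodes) and the constraint ∑_{i ∉ D} r_i ≥ kt − ∑_{j∈D} |P_j| holds for all k-subsets D, then ∑_{i=1}^n r_i ≥ (n·kt − k·∑_{i=1}^n |P_i|) / (n − k). -/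
/-!
Sum the constraint over all `C(n,k)` subsets `D` of size `k`. Each index lies in
`k·C(n,k)/n` of them, so the left sides add up to `C(n,k)·(kt - (k/n)·∑ P)` and,
writing `∑_{Dᶜ} r = ∑ r - ∑_D r`, the right sides to `C(n,k)·(1 - k/n)·∑ r`.
-/

open Finset

namespace Finset

variable {α : Type*} [DecidableEq α]

theorem card_mul_card_filter_mem_powersetCard (s : Finset α) (k : ℕ) {a : α} (ha : a ∈ s) :
    #s * #{D ∈ s.powersetCard k | a ∈ D} = k * (#s).choose k := by
  cases k with
  | zero => simp [powersetCard_zero]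
  | succ m =>
    have hcount := card_filter_powersetCard_subset {a} s (m + 1) (singleton_subset_iff.2 ha)
      (by simp)
    simp only [singleton_subset_iff, card_singleton, add_tsub_cancel_right] at hcount
    obtain ⟨n, hn⟩ : ∃ n, #s = n + 1 := ⟨#s - 1, by have := card_pos.2 ⟨a, ha⟩; omega⟩
    rw [hcount, hn, add_tsub_cancel_right, Nat.add_one_mul_choose_eq, mul_comm]

theorem card_smul_sum_powersetCard_sum {M : Type*} [AddCommMonoid M] (s : Finset α) (k : ℕ)
    (f : α → M) :
    #s • ∑ D ∈ s.powersetCard k, ∑ j ∈ D, f j = (k * (#s).choose k) • ∑ j ∈ s, f j := by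
  rw [sum_comm' (t' := s) (s' := fun j ↦ {D ∈ s.powersetCard k | j ∈ D})
    (fun D j ↦ ⟨fun ⟨hD, hj⟩ ↦ ⟨mem_filter.2 ⟨hD, hj⟩, (mem_powersetCard.1 hD).1 hj⟩,
      fun ⟨hD, _⟩ ↦ mem_filter.1 hD⟩)]
  simp only [sum_const, smul_sum, smul_smul]
  exact sum_congr rfl fun j hj ↦ by rw [card_mul_card_filter_mem_powersetCard s k hj]

end Finset

theorem stmt13_general (n k : ℕ) (hkn : k < n) (t : ℝ) (r P : Fin n → ℝ)
    (hcon : ∀ D : Finset (Fin n), D.card = k →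
      (k : ℝ) * t - ∑ j ∈ D, P j ≤ ∑ i ∈ Dᶜ, r i) :
    ∑ i, r i ≥ ((n : ℝ) * ((k : ℝ) * t) - (k : ℝ) * ∑ i, P i) / ((n : ℝ) - (k : ℝ)) := by
  set subsets := powersetCard k (univ : Finset (Fin n))
  have hcompl (D : Finset (Fin n)) : ∑ i ∈ Dᶜ, r i = ∑ i, r i - ∑ i ∈ D, r i :=
    eq_sub_of_add_eq (sum_compl_add_sum D r)
  have hsum := sum_le_sum fun D hD ↦ hcon D (mem_powersetCard_univ.1 hD)
  simp only [hcompl, sum_sub_distrib, sum_const, card_powersetCard, card_univ,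
    Fintype.card_fin, nsmul_eq_mul] at hsum
  have hcount (f : Fin n → ℝ) :
      (n : ℝ) * ∑ D ∈ subsets, ∑ j ∈ D, f j = k * n.choose k * ∑ j, f j := by
    simpa [nsmul_eq_mul] using card_smul_sum_powersetCard_sum univ k f
  have hchoose : (0 : ℝ) < n.choose k := by exact_mod_cast Nat.choose_pos hkn.le
  have hnk : (0 : ℝ) < n - k := sub_pos.2 (by exact_mod_cast hkn)
  have key : (n.choose k : ℝ) * (n * (k * t) - k * ∑ i, P i)
      ≤ n.choose k * ((∑ i, r i) * (n - k)) := by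
    linear_combination (n : ℝ) * hsum + hcount P - hcount r
  rw [ge_iff_le, div_le_iff₀ hnk]
  exact le_of_mul_le_mul_left key hchoose

/-- The `n_h ≤ k` case of Corollary 1: the repair constraints imply
`∑ r_i ≥ (n·kt - k·∑|P_i|)/(n - k)`. -/
theorem stmt13 (n k : ℕ) (hk : 1 ≤ k) (hkn : k < n) (t : ℝ) (r P : Fin n → ℝ)
    (hr : ∀ i, 0 ≤ r i) (hP : ∀ i, 0 ≤ P i ∧ P i ≤ t)
    (hcon : ∀ D : Finset (Fin n), D.card = k →
      (k : ℝ) * t - ∑ j ∈ D, P j ≤ ∑ i ∈ Dᶜ, r i) :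
    ∑ i, r i ≥ ((n : ℝ) * ((k : ℝ) * t) - (k : ℝ) * ∑ i, P i) / ((n : ℝ) - (k : ℝ)) :=
  stmt13_general n k hkn t r P hcon
end
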